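/- arXiv:1604.00561 — 2 statements merged into one kernel-verified Lean document; each statement's English description precedes it below -/
import Mathlib

section
/- Normal mixture representation of the multivariate t distribution: let p ∈ ℕ with p ≥ 1, μ ∈ ℝ^p, Σ ∈ ℝ^{p×p} symmetric positive definite, and ν > 0. If Z is a standard Gaussian random vector on ℝ^p (mean 0, identity covariance), q is a Gamma(ν/2, ν/2)-distributed real random variable, and Z and q are independent, then the law of X = μ + q^{−1/2} Σ^{1/2} Z (where Σ^{1/2} is the positive definite square root of Σ) is absolutely continuous with respect to Lebesgue measure on ℝ^p with density t_p(·; μ, Σ, ν). -/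
open MeasureTheory Matrix

/-- The multivariate t density with location `μ`, scale matrix `S`, and degrees of
freedom `ν`, on `ι → ℝ` with `p = Fintype.card ι`. -/
noncomputable def mvtPdf {ι : Type*} [Fintype ι] [DecidableEq ι]
    (μ : ι → ℝ) (S : Matrix ι ι ℝ) (ν : ℝ) (x : ι → ℝ) : ℝ :=
  Real.Gamma ((ν + Fintype.card ι) / 2) /
      (Real.Gamma (ν / 2) * (ν * Real.pi) ^ ((Fintype.card ι : ℝ) / 2) * Real.sqrt S.det) *
    (1 + ν⁻¹ * ((x - μ) ⬝ᵥ S⁻¹ *ᵥ (x - μ))) ^ (-(ν + Fintype.card ι) / 2)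

/-- The Gaussian density on `ι → ℝ` with mean `m` and covariance matrix `S`. -/
noncomputable def gaussPdf {ι : Type*} [Fintype ι] [DecidableEq ι]
    (m : ι → ℝ) (S : Matrix ι ι ℝ) (x : ι → ℝ) : ℝ :=
  (2 * Real.pi) ^ (-(Fintype.card ι : ℝ) / 2) * (Real.sqrt S.det)⁻¹ *
    Real.exp (-(1 / 2) * ((x - m) ⬝ᵥ S⁻¹ *ᵥ (x - m)))

/-- The Gamma(a, b) density on `(0, ∞)` (and `0` elsewhere). -/
noncomputable def gammaPdf (a b q : ℝ) : ℝ :=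
  if 0 < q then b ^ a / Real.Gamma a * q ^ (a - 1) * Real.exp (-b * q) else 0

/-!
Conditionally on `q = t > 0`, `X` is an affine image of `Z`, hence Gaussian with mean `μ` and
covariance `t⁻¹ Σ`; so the law of `X` has density `x ↦ ∫ g(t) φ_{μ, t⁻¹Σ}(x) dt`, `g` the
Gamma(ν/2, ν/2) density. With `Q = (x - μ)ᵀ Σ⁻¹ (x - μ)`, the integrand is `t^{p/2} e^{-Qt/2}`
times the Gamma density, i.e. a multiple of the Gamma((ν + p)/2, (ν + Q)/2) density, and
integrating it out leaves exactly `t_p(x; μ, Σ, ν)`.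
-/

open ProbabilityTheory
open scoped ENNReal

theorem MeasurableEquiv.map_withDensity {α β : Type*} [MeasurableSpace α] [MeasurableSpace β]
    (e : α ≃ᵐ β) (μ : Measure α) (f : α → ℝ≥0∞) :
    (μ.withDensity f).map e = (μ.map e).withDensity (f ∘ e.symm) := by
  ext s hs
  rw [Measure.map_apply e.measurable hs, withDensity_apply _ (e.measurable hs),
    withDensity_apply _ hs, Measure.restrict_map e.measurable hs,
    lintegral_map_equiv (f ∘ e.symm) e]
  simp

theorem Measure.map_prod_eq_withDensity_lintegral {α β γ : Type*} [MeasurableSpace α]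
    [MeasurableSpace β] [MeasurableSpace γ] {ρ : Measure α} {σ : Measure β} {η : Measure γ}
    [SFinite ρ] [SFinite σ] [SFinite η] {g : α × β → γ} (hg : Measurable g)
    {f : β → γ → ℝ≥0∞} (hf : Measurable (Function.uncurry f))
    (hfiber : ∀ᵐ t ∂σ, ρ.map (fun a => g (a, t)) = η.withDensity (f t)) :
    (ρ.prod σ).map g = η.withDensity fun x => ∫⁻ t, f t x ∂σ := by
  ext s hs
  calc (ρ.prod σ).map g s = ∫⁻ t, (ρ.map fun a => g (a, t)) s ∂σ := by
        rw [Measure.map_apply hg hs, Measure.prod_apply_symm (hg hs)]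
        exact lintegral_congr fun t => (Measure.map_apply (hg.comp measurable_prodMk_right) hs).symm
    _ = ∫⁻ t, ∫⁻ x in s, f t x ∂η ∂σ := by
        refine lintegral_congr_ae ?_
        filter_upwards [hfiber] with t ht
        rw [ht, withDensity_apply _ hs]
    _ = ∫⁻ x in s, ∫⁻ t, f t x ∂σ ∂η := lintegral_lintegral_swap hf.aemeasurable
    _ = _ := (withDensity_apply _ hs).symm

section

variable {ι : Type*} [Fintype ι] [DecidableEq ι]

namespace Matrix

theorem PosSemidef.cfc_sqrt_mul_transpose_self {S : Matrix ι ι ℝ} (hS : S.PosSemidef) :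
    cfc Real.sqrt S * (cfc Real.sqrt S)ᵀ = S := by
  have hSa : IsSelfAdjoint S := hS.isHermitian
  have hsymm : (cfc Real.sqrt S)ᵀ = cfc Real.sqrt S := by
    rw [← conjTranspose_eq_transpose_of_trivial]
    exact cfc_predicate Real.sqrt S
  rw [hsymm, ← cfc_mul Real.sqrt Real.sqrt S]
  conv_rhs => rw [← cfc_id' ℝ S]
  refine cfc_congr fun x hx => Real.mul_self_sqrt ?_
  rw [hS.isHermitian.spectrum_real_eq_range_eigenvalues] at hx
  obtain ⟨i, rfl⟩ := hx
  exact hS.eigenvalues_nonneg i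

theorem smul_inv₀ {K : Type*} [Field K] (t : K) (A : Matrix ι ι K) :
    (t • A)⁻¹ = t⁻¹ • A⁻¹ := by
  rcases eq_or_ne t 0 with rfl | ht
  · simp
  by_cases hA : IsUnit A.det
  · exact inv_eq_left_inv (by simp [smul_smul, ht, nonsing_inv_mul A hA])
  · have hA' : ¬IsUnit (t • A).det := by simpa [det_smul, ht] using hA
    rw [nonsing_inv_apply_not_isUnit _ hA', nonsing_inv_apply_not_isUnit _ hA, smul_zero]

theorem dotProduct_inv_mulVec_self (A : Matrix ι ι ℝ) (v : ι → ℝ) :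
    (A⁻¹ *ᵥ v) ⬝ᵥ (A⁻¹ *ᵥ v) = v ⬝ᵥ (A * Aᵀ)⁻¹ *ᵥ v := by
  rw [dotProduct_comm, dotProduct_mulVec, ← mulVec_transpose, mulVec_mulVec, mul_inv_rev,
    transpose_nonsing_inv]
  exact dotProduct_comm _ _

noncomputable def affineMeasurableEquiv (m : ι → ℝ) (A : Matrix ι ι ℝ) (hA : IsUnit A.det) :
    (ι → ℝ) ≃ᵐ (ι → ℝ) where
  toFun z := m + A *ᵥ z
  invFun x := A⁻¹ *ᵥ (x - m)
  left_inv z := by simp [mulVec_mulVec, nonsing_inv_mul A hA]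
  right_inv x := by simp [mulVec_mulVec, mul_nonsing_inv A hA]
  measurable_toFun :=
    (measurable_const_add m).comp (toLin' A).continuous_of_finiteDimensional.measurable
  measurable_invFun :=
    (toLin' A⁻¹).continuous_of_finiteDimensional.measurable.comp (measurable_sub_const m)

theorem map_volume_affineMeasurableEquiv (m : ι → ℝ) {A : Matrix ι ι ℝ} (hA : IsUnit A.det) :
    volume.map (affineMeasurableEquiv m A hA) = ENNReal.ofReal |A.det|⁻¹ • volume := by
  have h : ⇑(affineMeasurableEquiv m A hA) = (m + ·) ∘ toLin' A := rfl
  rw [h, ← Measure.map_map (measurable_const_add m)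
      (toLin' A).continuous_of_finiteDimensional.measurable,
    Real.map_matrix_volume_pi_eq_smul_volume_pi hA.ne_zero, Measure.map_smul,
    map_add_left_eq_self, abs_inv]

end Matrix

theorem gaussPdf_zero_one (z : ι → ℝ) :
    gaussPdf (0 : ι → ℝ) 1 z =
      (2 * Real.pi) ^ (-(Fintype.card ι : ℝ) / 2) * Real.exp (-(1 / 2) * (z ⬝ᵥ z)) := by
  simp [gaussPdf]

theorem map_withDensity_gaussPdf_affine (m : ι → ℝ) {A : Matrix ι ι ℝ} (hA : IsUnit A.det) :
    (volume.withDensity fun z => ENNReal.ofReal (gaussPdf (0 : ι → ℝ) 1 z)).map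
        (fun z => m + A *ᵥ z) =
      volume.withDensity fun x => ENNReal.ofReal (gaussPdf m (A * Aᵀ) x) := by
  change (volume.withDensity _).map (affineMeasurableEquiv m A hA) = _
  rw [MeasurableEquiv.map_withDensity, map_volume_affineMeasurableEquiv, withDensity_smul_measure,
    ← withDensity_smul' _ _ ENNReal.ofReal_ne_top]
  congr 1
  funext x
  rw [Pi.smul_apply, smul_eq_mul, Function.comp_apply, ← ENNReal.ofReal_mul (by positivity)]
  congr 1
  change _ * gaussPdf 0 1 (A⁻¹ *ᵥ (x - m)) = _
  rw [gaussPdf_zero_one, dotProduct_inv_mulVec_self, gaussPdf, det_mul, det_transpose,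
    Real.sqrt_mul_self_eq_abs]
  ring

theorem map_withDensity_gaussPdf_inv_sqrt_smul (m : ι → ℝ) {R S : Matrix ι ι ℝ}
    (hRS : R * Rᵀ = S) (hS : IsUnit S.det) {t : ℝ} (ht : 0 < t) :
    (volume.withDensity fun z => ENNReal.ofReal (gaussPdf (0 : ι → ℝ) 1 z)).map
        (fun z => m + (Real.sqrt t)⁻¹ • (R *ᵥ z)) =
      volume.withDensity fun x => ENNReal.ofReal (gaussPdf m (t⁻¹ • S) x) := by
  have hc : (Real.sqrt t)⁻¹ * (Real.sqrt t)⁻¹ = t⁻¹ := by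
    rw [← mul_inv, Real.mul_self_sqrt ht.le]
  have hR : IsUnit ((Real.sqrt t)⁻¹ • R).det := by
    rw [← hRS, det_mul, det_transpose, IsUnit.mul_iff, and_self] at hS
    rw [det_smul]
    exact ((inv_pos.2 (Real.sqrt_pos.2 ht)).ne'.isUnit.pow _).mul hS
  simp_rw [← smul_mulVec]
  rw [map_withDensity_gaussPdf_affine m hR, transpose_smul, smul_mul_smul_comm, hc, hRS]

-- Valid for every `t`, `t = 0` included (junk values on both sides), hence measurable in `t`.
theorem gaussPdf_inv_smul (m : ι → ℝ) (S : Matrix ι ι ℝ) (t : ℝ) (x : ι → ℝ) :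
    gaussPdf m (t⁻¹ • S) x = (2 * Real.pi) ^ (-(Fintype.card ι : ℝ) / 2) *
      (Real.sqrt (t⁻¹ ^ Fintype.card ι * S.det))⁻¹ *
      Real.exp (-(t / 2 * ((x - m) ⬝ᵥ S⁻¹ *ᵥ (x - m)))) := by
  rw [gaussPdf, det_smul, Matrix.smul_inv₀, inv_inv, smul_mulVec, dotProduct_smul, smul_eq_mul]
  ring_nf

theorem measurable_gaussPdf_inv_smul (m : ι → ℝ) (S : Matrix ι ι ℝ) :
    Measurable fun tx : ℝ × (ι → ℝ) => gaussPdf m (tx.1⁻¹ • S) tx.2 := by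
  simp_rw [gaussPdf_inv_smul]
  fun_prop

theorem gaussPdf_inv_smul_of_pos (m : ι → ℝ) (S : Matrix ι ι ℝ) {t : ℝ} (ht : 0 < t)
    (x : ι → ℝ) :
    gaussPdf m (t⁻¹ • S) x = (2 * Real.pi) ^ (-(Fintype.card ι : ℝ) / 2) * (Real.sqrt S.det)⁻¹ *
      (t ^ ((Fintype.card ι : ℝ) / 2) * Real.exp (-(((x - m) ⬝ᵥ S⁻¹ *ᵥ (x - m)) / 2 * t))) := by
  rw [gaussPdf_inv_smul, Real.sqrt_mul (by positivity), Real.sqrt_eq_rpow, ← Real.rpow_natCast,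
    ← Real.rpow_mul (by positivity), Real.inv_rpow ht.le, mul_inv, inv_inv]
  ring_nf

end

theorem gammaPdf_nonneg {a b : ℝ} (ha : 0 < a) (hb : 0 < b) (t : ℝ) : 0 ≤ gammaPdf a b t := by
  unfold gammaPdf
  split_ifs
  · have := Real.Gamma_pos_of_pos ha
    positivity
  · exact le_rfl

@[fun_prop]
theorem measurable_gammaPdf (a b : ℝ) : Measurable fun t => gammaPdf a b t :=
  Measurable.ite measurableSet_Ioi (by fun_prop) measurable_const

theorem gammaPdf_mul_rpow_mul_exp {a b c k t : ℝ} (hbc : 0 < b + c) (hak : 0 < a + k)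
    (ht : 0 < t) :
    gammaPdf a b t * (t ^ k * Real.exp (-(c * t))) =
      b ^ a * Real.Gamma (a + k) / (Real.Gamma a * (b + c) ^ (a + k)) *
        gammaPDFReal (a + k) (b + c) t := by
  have hΓ := (Real.Gamma_pos_of_pos hak).ne'
  have hpow := (Real.rpow_pos_of_pos hbc (a + k)).ne'
  rw [gammaPdf, if_pos ht, gammaPDFReal, if_pos ht.le, add_sub_right_comm, Real.rpow_add ht,
    ← neg_mul, ← neg_mul, neg_add, add_mul, Real.exp_add]
  field_simp

theorem lintegral_gammaPdf_mul_rpow_mul_exp {a b c k : ℝ} (ha : 0 < a) (hb : 0 < b)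
    (hbc : 0 < b + c) (hak : 0 < a + k) :
    ∫⁻ t, ENNReal.ofReal (gammaPdf a b t) * ENNReal.ofReal (t ^ k * Real.exp (-(c * t))) =
      ENNReal.ofReal (b ^ a * Real.Gamma (a + k) / (Real.Gamma a * (b + c) ^ (a + k))) := by
  set C := b ^ a * Real.Gamma (a + k) / (Real.Gamma a * (b + c) ^ (a + k))
  have hC : 0 ≤ C := by
    have := Real.Gamma_pos_of_pos ha
    have := Real.Gamma_pos_of_pos hak
    positivity
  have hpt : ∀ᵐ t : ℝ, ENNReal.ofReal (gammaPdf a b t) *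
      ENNReal.ofReal (t ^ k * Real.exp (-(c * t))) =
        ENNReal.ofReal C * gammaPDF (a + k) (b + c) t := by
    filter_upwards [Measure.ae_ne volume 0] with t ht0
    rcases ht0.lt_or_gt with ht | ht
    · simp [gammaPdf, gammaPDF, gammaPDFReal, ht.not_gt, ht.not_ge]
    · rw [← ENNReal.ofReal_mul (gammaPdf_nonneg ha hb t), gammaPdf_mul_rpow_mul_exp hbc hak ht,
        ENNReal.ofReal_mul hC, gammaPDF]
  rw [lintegral_congr_ae hpt, lintegral_const_mul' _ _ ENNReal.ofReal_ne_top,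
    lintegral_gammaPDF_eq_one hak hbc, mul_one]

theorem gaussian_gamma_mixture_eq_mvt {ν n Q d : ℝ} (hν : 0 < ν) (hQ : 0 ≤ Q) :
    (2 * Real.pi) ^ (-n / 2) * d⁻¹ * ((ν / 2) ^ (ν / 2) * Real.Gamma (ν / 2 + n / 2) /
        (Real.Gamma (ν / 2) * (ν / 2 + Q / 2) ^ (ν / 2 + n / 2))) =
      Real.Gamma ((ν + n) / 2) / (Real.Gamma (ν / 2) * (ν * Real.pi) ^ (n / 2) * d) *
        (1 + ν⁻¹ * Q) ^ (-(ν + n) / 2) := by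
  have hν2 : 0 < ν / 2 := by positivity
  have hR : 0 < 1 + ν⁻¹ * Q := by positivity
  have hsplit : (ν / 2 + Q / 2) ^ ((ν + n) / 2) =
      (ν / 2) ^ (ν / 2) * (ν / 2) ^ (n / 2) * (1 + ν⁻¹ * Q) ^ ((ν + n) / 2) := by
    rw [show ν / 2 + Q / 2 = ν / 2 * (1 + ν⁻¹ * Q) by field_simp, Real.mul_rpow hν2.le hR.le,
      ← Real.rpow_add hν2, ← add_div]
  have hscale : (ν * Real.pi) ^ (n / 2) = (ν / 2) ^ (n / 2) * (2 * Real.pi) ^ (n / 2) := by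
    rw [← Real.mul_rpow hν2.le (by positivity)]
    ring_nf
  have hΓ := Real.Gamma_pos_of_pos hν2
  rw [← add_div, hsplit, hscale, neg_div, neg_div, Real.rpow_neg (by positivity),
    Real.rpow_neg hR.le]
  field_simp

theorem lintegral_gaussPdf_inv_smul_withDensity_gammaPdf {ι : Type*} [Fintype ι]
    [DecidableEq ι] (μ : ι → ℝ) {S : Matrix ι ι ℝ} (hS : S.PosDef) {ν : ℝ} (hν : 0 < ν)
    (x : ι → ℝ) :
    ∫⁻ t, ENNReal.ofReal (gaussPdf μ (t⁻¹ • S) x)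
        ∂(volume.withDensity fun t => ENNReal.ofReal (gammaPdf (ν / 2) (ν / 2) t)) =
      ENNReal.ofReal (mvtPdf μ S ν x) := by
  have hmeas : Measurable fun t => ENNReal.ofReal (gaussPdf μ (t⁻¹ • S) x) :=
    ((measurable_gaussPdf_inv_smul μ S).comp measurable_prodMk_right).ennreal_ofReal
  rw [lintegral_withDensity_eq_lintegral_mul _ (by fun_prop) hmeas, mvtPdf]
  simp only [Pi.mul_apply]
  set n : ℝ := (Fintype.card ι : ℝ)
  set Q := (x - μ) ⬝ᵥ S⁻¹ *ᵥ (x - μ)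
  have hQ : 0 ≤ Q := by
    simpa only [star_trivial] using hS.posSemidef.inv.dotProduct_mulVec_nonneg (x - μ)
  set K := (2 * Real.pi) ^ (-n / 2) * (Real.sqrt S.det)⁻¹
  have hK : 0 ≤ K := by positivity
  have hpt : ∀ t, ENNReal.ofReal (gammaPdf (ν / 2) (ν / 2) t) *
      ENNReal.ofReal (gaussPdf μ (t⁻¹ • S) x) = ENNReal.ofReal K *
        (ENNReal.ofReal (gammaPdf (ν / 2) (ν / 2) t) *
          ENNReal.ofReal (t ^ (n / 2) * Real.exp (-(Q / 2 * t)))) := by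
    intro t
    rcases le_or_gt t 0 with ht | ht
    · simp [gammaPdf, ht.not_gt]
    · rw [gaussPdf_inv_smul_of_pos μ S ht, ENNReal.ofReal_mul hK]
      ring
  rw [lintegral_congr hpt, lintegral_const_mul' _ _ ENNReal.ofReal_ne_top,
    lintegral_gammaPdf_mul_rpow_mul_exp (by positivity) (by positivity) (by positivity)
      (by positivity), ← ENNReal.ofReal_mul hK, gaussian_gamma_mixture_eq_mvt hν hQ]

theorem mvt_normal_mixture_representation_general (p : ℕ) (μ : Fin p → ℝ)
    (S : Matrix (Fin p) (Fin p) ℝ) (hS : S.PosDef) (ν : ℝ) (hν : 0 < ν)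
    {Ω : Type*} [MeasurableSpace Ω] (P : Measure Ω) [IsProbabilityMeasure P]
    (Z : Ω → Fin p → ℝ) (q : Ω → ℝ) (hZm : Measurable Z) (hqm : Measurable q)
    (hZ : Measure.map Z P
        = volume.withDensity fun z => ENNReal.ofReal (gaussPdf (0 : Fin p → ℝ) (1 : Matrix (Fin p) (Fin p) ℝ) z))
    (hq : Measure.map q P = volume.withDensity fun t => ENNReal.ofReal (gammaPdf (ν / 2) (ν / 2) t))
    (hind : ProbabilityTheory.IndepFun Z q P) :
    Measure.map (fun ω => μ + (Real.sqrt (q ω))⁻¹ • (((hS.posSemidef.isHermitian.eigenvectorUnitary : Matrix (Fin p) (Fin p) ℝ) *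
      diagonal (Real.sqrt ∘ hS.posSemidef.isHermitian.eigenvalues) *
      (star hS.posSemidef.isHermitian.eigenvectorUnitary : Matrix (Fin p) (Fin p) ℝ)) *ᵥ Z ω)) P
      = volume.withDensity fun x => ENNReal.ofReal (mvtPdf μ S ν x) := by
  set R : Matrix (Fin p) (Fin p) ℝ := _ * _ * _
  have hRS : R * Rᵀ = S := by
    have hR : R = cfc Real.sqrt S := by rw [hS.posSemidef.isHermitian.cfc_eq]; rfl
    rw [hR, hS.posSemidef.cfc_sqrt_mul_transpose_self]
  set g : (Fin p → ℝ) × ℝ → Fin p → ℝ := fun zt => μ + (Real.sqrt zt.2)⁻¹ • (R *ᵥ zt.1)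
  have hg : Measurable g := by fun_prop
  have hlaw : P.map (fun ω => (Z ω, q ω)) = (P.map Z).prod (P.map q) :=
    (indepFun_iff_map_prod_eq_prod_map_map hZm.aemeasurable hqm.aemeasurable).1 hind
  have hfiber : ∀ᵐ t ∂(P.map q), (P.map Z).map (fun z => g (z, t)) =
      volume.withDensity fun x => ENNReal.ofReal (gaussPdf μ (t⁻¹ • S) x) := by
    rw [hq, ae_withDensity_iff (by fun_prop)]
    refine ae_of_all _ fun t hγ => ?_
    have ht : 0 < t := by
      by_contra h
      simp [gammaPdf, h] at hγ
    rw [hZ]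
    exact map_withDensity_gaussPdf_inv_sqrt_smul μ hRS hS.det_pos.ne'.isUnit ht
  calc P.map (g ∘ fun ω => (Z ω, q ω)) = (P.map fun ω => (Z ω, q ω)).map g :=
        (Measure.map_map hg (hZm.prodMk hqm)).symm
    _ = volume.withDensity fun x => ∫⁻ t, ENNReal.ofReal (gaussPdf μ (t⁻¹ • S) x) ∂(P.map q) := by
        rw [hlaw]
        exact Measure.map_prod_eq_withDensity_lintegral hg
          (measurable_gaussPdf_inv_smul μ S).ennreal_ofReal hfiber
    _ = _ := by simp_rw [hq, lintegral_gaussPdf_inv_smul_withDensity_gammaPdf μ hS hν]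

/-- Normal mixture representation: if `Z` is standard Gaussian on `ℝ^p`, `q ~ Gamma(ν/2, ν/2)`
independent of `Z`, then `X = μ + q^{-1/2} Σ^{1/2} Z` has density `t_p(·; μ, Σ, ν)` with respect
to Lebesgue measure. -/
theorem mvt_normal_mixture_representation (p : ℕ) (hp : 1 ≤ p) (μ : Fin p → ℝ)
    (S : Matrix (Fin p) (Fin p) ℝ) (hS : S.PosDef) (ν : ℝ) (hν : 0 < ν)
    {Ω : Type*} [MeasurableSpace Ω] (P : Measure Ω) [IsProbabilityMeasure P]
    (Z : Ω → Fin p → ℝ) (q : Ω → ℝ) (hZm : Measurable Z) (hqm : Measurable q)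
    (hZ : Measure.map Z P
        = volume.withDensity fun z => ENNReal.ofReal (gaussPdf (0 : Fin p → ℝ) (1 : Matrix (Fin p) (Fin p) ℝ) z))
    (hq : Measure.map q P = volume.withDensity fun t => ENNReal.ofReal (gammaPdf (ν / 2) (ν / 2) t))
    (hind : ProbabilityTheory.IndepFun Z q P) :
    Measure.map (fun ω => μ + (Real.sqrt (q ω))⁻¹ • (((hS.posSemidef.isHermitian.eigenvectorUnitary : Matrix (Fin p) (Fin p) ℝ) *
      diagonal (Real.sqrt ∘ hS.posSemidef.isHermitian.eigenvalues) *
      (star hS.posSemidef.isHermitian.eigenvectorUnitary : Matrix (Fin p) (Fin p) ℝ)) *ᵥ Z ω)) P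
      = volume.withDensity fun x => ENNReal.ofReal (mvtPdf μ S ν x) :=
  mvt_normal_mixture_representation_general p μ S hS ν hν P Z q hZm hqm hZ hq hind
end

section
/- Conclusion One (conditional distribution of the multivariate t is multivariate t, density form): let p1, p2 ∈ ℕ with p1, p2 ≥ 1, μ = (μ1, μ2) ∈ ℝ^{p1} × ℝ^{p2}, Σ a symmetric positive definite matrix on ℝ^{p1+p2} with blocks Σ11, Σ12, Σ21, Σ22, and ν > 0. Then for every x1 ∈ ℝ^{p1} and x2 ∈ ℝ^{p2}, t_{p1+p2}((x1, x2); μ, Σ, ν) / t_{p1}(x1; μ1, Σ11, ν) = t_{p2}(x2; μ_{2|1}(x1), ((ν + d1(x1))/(ν + p1)) Σ_{22|1}, ν + p1), where the matrix ((ν + d1(x1))/(ν + p1)) Σ_{22|1} is symmetric positive definite. -/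
/-!
Write `S` for the block scale matrix and `W = S₂₂ - S₂₁ S₁₁⁻¹ S₁₂` for its Schur complement. The
factorisation `S = L (S₁₁ ⊕ W) Lᵀ` with `L` unipotent lower triangular gives `det S = det S₁₁ det W`
and splits the Mahalanobis distance as `d((x₁, x₂)) = d₁(x₁) + q(x₂)`, where `q` is the quadratic
form of `W⁻¹` at `x₂ - μ₂|₁(x₁)`. The t density depends on `x` only through its dimension, `det S`
and the Mahalanobis distance; after taking logarithms the resulting scalar identity is linear in
the logarithms of `ν + d₁`, `ν + d₁ + q`, `ν`, `ν + p₁`, `π` and the determinants.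
-/

open MeasureTheory Matrix

namespace Matrix

section Field

variable {m n K : Type*} [Fintype m] [Fintype n] [DecidableEq m] [DecidableEq n] [Field K]

theorem mulVec_dotProduct_inv_mul_mul_transpose_mulVec {L : Matrix n n K} (hL : IsUnit L.det)
    (Δ : Matrix n n K) (z : n → K) :
    (L *ᵥ z) ⬝ᵥ (L * Δ * Lᵀ)⁻¹ *ᵥ (L *ᵥ z) = z ⬝ᵥ Δ⁻¹ *ᵥ z := by
  have hLz : L⁻¹ *ᵥ (L *ᵥ z) = z := by rw [mulVec_mulVec, nonsing_inv_mul L hL, one_mulVec]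
  rw [mul_inv_rev, mul_inv_rev, ← transpose_nonsing_inv, ← mulVec_mulVec, ← mulVec_mulVec,
    hLz, dotProduct_mulVec, vecMul_transpose, hLz]

theorem fromBlocks_eq_mul_mul_transpose {A : Matrix m m K} (hA : A.IsSymm) (hA' : IsUnit A.det)
    (B : Matrix m n K) (D : Matrix n n K) :
    fromBlocks A B Bᵀ D = fromBlocks 1 0 (Bᵀ * A⁻¹) 1 * fromBlocks A 0 0 (D - Bᵀ * A⁻¹ * B) *
      (fromBlocks 1 0 (Bᵀ * A⁻¹) 1)ᵀ := by
  let _ := invertibleOfIsUnitDet A hA'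
  rw [fromBlocks_eq_of_invertible₁₁, fromBlocks_transpose]
  simp [transpose_mul, transpose_nonsing_inv, hA.eq, invOf_eq_nonsing_inv]

theorem sumElim_dotProduct_fromBlocks_inv_mulVec {A : Matrix m m K} (hA : A.IsSymm)
    (hA' : IsUnit A.det) (B : Matrix m n K) (D : Matrix n n K)
    (hW : IsUnit (D - Bᵀ * A⁻¹ * B).det) (u : m → K) (v : n → K) :
    Sum.elim u v ⬝ᵥ (fromBlocks A B Bᵀ D)⁻¹ *ᵥ Sum.elim u v =
      u ⬝ᵥ A⁻¹ *ᵥ u +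
        (v - Bᵀ *ᵥ A⁻¹ *ᵥ u) ⬝ᵥ (D - Bᵀ * A⁻¹ * B)⁻¹ *ᵥ (v - Bᵀ *ᵥ A⁻¹ *ᵥ u) := by
  set L : Matrix (m ⊕ n) (m ⊕ n) K := fromBlocks 1 0 (Bᵀ * A⁻¹) 1
  have hL : IsUnit L.det := by simp [L]
  have hz : Sum.elim u v = L *ᵥ Sum.elim u (v - Bᵀ *ᵥ A⁻¹ *ᵥ u) := by
    simp [L, fromBlocks_mulVec, mulVec_mulVec]
  rw [fromBlocks_eq_mul_mul_transpose hA hA', hz,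
    mulVec_dotProduct_inv_mul_mul_transpose_mulVec hL, inv_fromBlocks_zero₂₁_of_isUnit_iff _ _ _
      (iff_of_true ((isUnit_iff_isUnit_det _).mpr hA') ((isUnit_iff_isUnit_det _).mpr hW))]
  simp [fromBlocks_mulVec, sumElim_dotProduct_sumElim]

theorem dotProduct_smul_inv_mulVec {W : Matrix n n K} (hW : IsUnit W.det) {c : K} (hc : c ≠ 0)
    (v : n → K) : v ⬝ᵥ (c • W)⁻¹ *ᵥ v = c⁻¹ * (v ⬝ᵥ W⁻¹ *ᵥ v) := by
  let _ := invertibleOfNonzero hc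
  rw [inv_smul _ _ hW, invOf_eq_inv, smul_mulVec, dotProduct_smul, smul_eq_mul]

end Field

open scoped ComplexOrder

theorem PosDef.fromBlocks₁₁_posDef {m n 𝕜 : Type*} [RCLike 𝕜] {A : Matrix m m 𝕜}
    {B : Matrix m n 𝕜} {C : Matrix n m 𝕜} {D : Matrix n n 𝕜} (hS : (fromBlocks A B C D).PosDef) :
    A.PosDef :=
  hS.submatrix Sum.inl_injective

theorem PosDef.schur_complement_posDef {m n 𝕜 : Type*} [Fintype m] [Fintype n] [DecidableEq m]
    [DecidableEq n] [RCLike 𝕜] {A : Matrix m m 𝕜} {B : Matrix m n 𝕜} {D : Matrix n n 𝕜}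
    (hS : (fromBlocks A B Bᴴ D).PosDef) : (D - Bᴴ * A⁻¹ * B).PosDef := by
  have hA := hS.fromBlocks₁₁_posDef
  let _ := hA.isUnit.invertible
  refine ((PosDef.fromBlocks₁₁ B D hA).mp hS.posSemidef).posDef_iff_det_ne_zero.mpr ?_
  have hdet := hS.det_pos.ne'
  rw [det_fromBlocks₁₁, invOf_eq_nonsing_inv] at hdet
  exact right_ne_zero_of_mul hdet

end Matrix

open Real

noncomputable def mvtProfile (ν p g q : ℝ) : ℝ :=
  Gamma ((ν + p) / 2) / (Gamma (ν / 2) * (ν * π) ^ (p / 2) * √g) *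
    (1 + ν⁻¹ * q) ^ (-(ν + p) / 2)

theorem mvtPdf_eq_mvtProfile {ι : Type*} [Fintype ι] [DecidableEq ι]
    (μ : ι → ℝ) (S : Matrix ι ι ℝ) (ν : ℝ) (x : ι → ℝ) :
    mvtPdf μ S ν x = mvtProfile ν (Fintype.card ι) S.det ((x - μ) ⬝ᵥ S⁻¹ *ᵥ (x - μ)) :=
  rfl

section Profile

variable {ν p g q : ℝ}

theorem mvtProfile_pos (hν : 0 < ν) (hp : 0 ≤ p) (hg : 0 < g) (hq : 0 ≤ q) :
    0 < mvtProfile ν p g q := by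
  have := Gamma_pos_of_pos (show 0 < (ν + p) / 2 by positivity)
  have := Gamma_pos_of_pos (show 0 < ν / 2 by positivity)
  unfold mvtProfile
  positivity

theorem log_mvtProfile (hν : 0 < ν) (hp : 0 ≤ p) (hg : 0 < g) (hq : 0 ≤ q) :
    log (mvtProfile ν p g q) = log (Gamma ((ν + p) / 2)) - log (Gamma (ν / 2)) -
      p / 2 * log π - log g / 2 + ν / 2 * log ν - (ν + p) / 2 * log (ν + q) := by
  have := Gamma_pos_of_pos (show 0 < (ν + p) / 2 by positivity)
  have := Gamma_pos_of_pos (show 0 < ν / 2 by positivity)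
  have hbase : 1 + ν⁻¹ * q = (ν + q) / ν := by field_simp
  unfold mvtProfile
  rw [hbase, log_mul (by positivity) (by positivity), log_div (by positivity) (by positivity),
    log_mul (by positivity) (by positivity), log_mul (by positivity) (by positivity),
    log_rpow (by positivity), log_rpow (by positivity), log_sqrt hg.le,
    log_mul hν.ne' pi_ne_zero, log_div (by positivity) hν.ne']
  ring

end Profile

theorem mvtProfile_add_div_mvtProfile {ν p₁ g₁ g₂ d q : ℝ} (p₂ : ℕ) (hν : 0 < ν) (hp₁ : 0 ≤ p₁)
    (hg₁ : 0 < g₁) (hg₂ : 0 < g₂) (hd : 0 ≤ d) (hq : 0 ≤ q) :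
    mvtProfile ν (p₁ + p₂) (g₁ * g₂) (d + q) / mvtProfile ν p₁ g₁ d =
      mvtProfile (ν + p₁) p₂ (((ν + d) / (ν + p₁)) ^ p₂ * g₂) (((ν + d) / (ν + p₁))⁻¹ * q) := by
  have hc : 0 < (ν + d) / (ν + p₁) := by positivity
  have hq' : 0 ≤ ((ν + d) / (ν + p₁))⁻¹ * q := by positivity
  have hp : 0 ≤ p₁ + p₂ := by positivity
  have hjoint := mvtProfile_pos hν hp (mul_pos hg₁ hg₂) (add_nonneg hd hq)
  have hmarg := mvtProfile_pos hν hp₁ hg₁ hd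
  have hcond := mvtProfile_pos (by positivity : 0 < ν + p₁) (Nat.cast_nonneg p₂)
    (mul_pos (pow_pos hc p₂) hg₂) hq'
  have hshift : ν + p₁ + ((ν + d) / (ν + p₁))⁻¹ * q = (ν + p₁) * (ν + d + q) / (ν + d) := by
    field_simp
  refine log_injOn_pos (div_pos hjoint hmarg) hcond ?_
  rw [log_div hjoint.ne' hmarg.ne', log_mvtProfile hν hp (mul_pos hg₁ hg₂) (add_nonneg hd hq),
    log_mvtProfile hν hp₁ hg₁ hd, log_mvtProfile (by positivity) (Nat.cast_nonneg p₂)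
      (mul_pos (pow_pos hc p₂) hg₂) hq',
    hshift, log_mul (pow_pos hc p₂).ne' hg₂.ne', log_mul hg₁.ne' hg₂.ne', log_pow,
    ← add_assoc ν p₁, ← add_assoc ν d, log_div (by positivity) (by positivity),
    log_div (by positivity) (by positivity), log_mul (by positivity) (by positivity)]
  ring

theorem mvt_conditional_general (p1 p2 : ℕ)
    (μ1 : Fin p1 → ℝ) (μ2 : Fin p2 → ℝ)
    (S11 : Matrix (Fin p1) (Fin p1) ℝ) (S12 : Matrix (Fin p1) (Fin p2) ℝ)
    (S21 : Matrix (Fin p2) (Fin p1) ℝ) (S22 : Matrix (Fin p2) (Fin p2) ℝ)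
    (hS : (Matrix.fromBlocks S11 S12 S21 S22).PosDef) (ν : ℝ) (hν : 0 < ν)
    (x1 : Fin p1 → ℝ) (x2 : Fin p2 → ℝ) :
    (((ν + (x1 - μ1) ⬝ᵥ S11⁻¹ *ᵥ (x1 - μ1)) / (ν + p1)) •
        (S22 - S21 * S11⁻¹ * S12)).PosDef ∧
    mvtPdf (Sum.elim μ1 μ2) (Matrix.fromBlocks S11 S12 S21 S22) ν (Sum.elim x1 x2) /
        mvtPdf μ1 S11 ν x1
      = mvtPdf (μ2 + S21 *ᵥ (S11⁻¹ *ᵥ (x1 - μ1)))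
          (((ν + (x1 - μ1) ⬝ᵥ S11⁻¹ *ᵥ (x1 - μ1)) / (ν + p1)) • (S22 - S21 * S11⁻¹ * S12))
          (ν + p1) x2 := by
  obtain ⟨-, hS21, -, -⟩ := isHermitian_fromBlocks_iff.mp hS.1
  subst hS21
  have hA : S11.PosDef := hS.fromBlocks₁₁_posDef
  have hW := hS.schur_complement_posDef
  simp only [conjTranspose_eq_transpose_of_trivial] at hW ⊢
  set u := x1 - μ1
  set W := S22 - S12ᵀ * S11⁻¹ * S12
  set w := x2 - μ2 - S12ᵀ *ᵥ S11⁻¹ *ᵥ u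
  set c := (ν + u ⬝ᵥ S11⁻¹ *ᵥ u) / (ν + p1)
  have hd : 0 ≤ u ⬝ᵥ S11⁻¹ *ᵥ u := hA.inv.posSemidef.dotProduct_mulVec_nonneg u
  have hq : 0 ≤ w ⬝ᵥ W⁻¹ *ᵥ w := hW.inv.posSemidef.dotProduct_mulVec_nonneg w
  have hc : 0 < c := by positivity
  refine ⟨hW.smul hc, ?_⟩
  have hjointDet : (fromBlocks S11 S12 S12ᵀ S22).det = S11.det * W.det := by
    let _ := hA.isUnit.invertible
    rw [det_fromBlocks₁₁, invOf_eq_nonsing_inv]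
  have hjointQuad : (Sum.elim x1 x2 - Sum.elim μ1 μ2) ⬝ᵥ (fromBlocks S11 S12 S12ᵀ S22)⁻¹ *ᵥ
      (Sum.elim x1 x2 - Sum.elim μ1 μ2) = u ⬝ᵥ S11⁻¹ *ᵥ u + w ⬝ᵥ W⁻¹ *ᵥ w := by
    rw [← Sum.elim_sub_sub, sumElim_dotProduct_fromBlocks_inv_mulVec
      (isHermitian_iff_isSymm.mp hA.1) hA.det_pos.ne'.isUnit _ _ hW.det_pos.ne'.isUnit]
  have hcondDet : (c • W).det = c ^ p2 * W.det := by rw [det_smul, Fintype.card_fin]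
  simp only [mvtPdf_eq_mvtProfile, hjointDet, hjointQuad, hcondDet, ← sub_sub,
    dotProduct_smul_inv_mulVec hW.det_pos.ne'.isUnit hc.ne', Fintype.card_sum, Fintype.card_fin,
    Nat.cast_add]
  exact mvtProfile_add_div_mvtProfile p2 hν p1.cast_nonneg hA.det_pos hW.det_pos hd hq

/-- Conclusion One: the conditional density of the second block given the first, i.e.
the ratio of the joint multivariate t density to the marginal multivariate t density,
is the multivariate t density with location `μ₂ + Σ₂₁Σ₁₁⁻¹(x₁-μ₁)`, scale matrix
`((ν + d₁(x₁))/(ν + p₁)) Σ₂₂|₁`, and degrees of freedom `ν + p₁`; moreover that scale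
matrix is symmetric positive definite. -/
theorem mvt_conditional (p1 p2 : ℕ) (hp1 : 1 ≤ p1) (hp2 : 1 ≤ p2)
    (μ1 : Fin p1 → ℝ) (μ2 : Fin p2 → ℝ)
    (S11 : Matrix (Fin p1) (Fin p1) ℝ) (S12 : Matrix (Fin p1) (Fin p2) ℝ)
    (S21 : Matrix (Fin p2) (Fin p1) ℝ) (S22 : Matrix (Fin p2) (Fin p2) ℝ)
    (hS : (Matrix.fromBlocks S11 S12 S21 S22).PosDef) (ν : ℝ) (hν : 0 < ν)
    (x1 : Fin p1 → ℝ) (x2 : Fin p2 → ℝ) :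
    (((ν + (x1 - μ1) ⬝ᵥ S11⁻¹ *ᵥ (x1 - μ1)) / (ν + p1)) •
        (S22 - S21 * S11⁻¹ * S12)).PosDef ∧
    mvtPdf (Sum.elim μ1 μ2) (Matrix.fromBlocks S11 S12 S21 S22) ν (Sum.elim x1 x2) /
        mvtPdf μ1 S11 ν x1
      = mvtPdf (μ2 + S21 *ᵥ (S11⁻¹ *ᵥ (x1 - μ1)))
          (((ν + (x1 - μ1) ⬝ᵥ S11⁻¹ *ᵥ (x1 - μ1)) / (ν + p1)) • (S22 - S21 * S11⁻¹ * S12))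
          (ν + p1) x2 :=
  mvt_conditional_general p1 p2 μ1 μ2 S11 S12 S21 S22 hS ν hν x1 x2
end
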